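/- arXiv:1703.04390 — 6 statements merged into one kernel-verified Lean document; each statement's English description precedes it below -/
import Mathlib

section
/- If a triangulation of a regular polygon by non-crossing diagonals is invariant under the rotation group Z_k (rotations by angles 2πi/k for i = 1, …, k−1) acting on the polygon with n = km sides (m ≥ 1, k ≥ 2), then k = 2 or k = 3. -/
open Finset

/-- `c` lies strictly between `a` and `b` going counterclockwise around the `n`-gon. -/
def PolyBtw (n : ℕ) (a c b : Fin n) : Prop :=
  0 < (c - a).val ∧ (c - a).val < (b - a).val

/-- `e` is a diagonal of the convex `n`-gon: a pair of non-adjacent vertices. -/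
def PolyIsDiag (n : ℕ) (e : Finset (Fin n)) : Prop :=
  ∃ a b : Fin n, e = {a, b} ∧ 2 ≤ (b - a).val ∧ 2 ≤ (a - b).val

/-- Two chords of the `n`-gon cross (interiors of the chords intersect). -/
def PolyCross (n : ℕ) (e f : Finset (Fin n)) : Prop :=
  ∃ a b c d : Fin n, e = {a, b} ∧ f = {c, d} ∧ PolyBtw n a c b ∧ PolyBtw n b d a

/-- A triangulation of a convex `n`-gon by non-crossing diagonals, encoded as a
maximal family of pairwise non-crossing diagonals (such a family has `n - 3` members). -/
structure PolyTriangulation (n : ℕ) where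
  diags : Finset (Finset (Fin n))
  isDiag : ∀ e ∈ diags, PolyIsDiag n e
  noncross : ∀ e ∈ diags, ∀ f ∈ diags, e ≠ f → ¬ PolyCross n e f
  card_diags : diags.card = n - 3

/-- A non-crossing perfect matching of the `m` sides of an `m`-gon (sides indexed by
`Fin m`), i.e. a genus-zero pairwise gluing of the sides. -/
structure PolyNCMatching (m : ℕ) where
  pairs : Finset (Finset (Fin m))
  card_two : ∀ e ∈ pairs, e.card = 2
  disj : ∀ e ∈ pairs, ∀ f ∈ pairs, e ≠ f → Disjoint e f
  cover : ∀ i : Fin m, ∃ e ∈ pairs, i ∈ e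
  noncross : ∀ e ∈ pairs, ∀ f ∈ pairs, e ≠ f → ¬ PolyCross m e f

/-! A diagonal fixed by a nontrivial rotation `g` is swapped by it, so `g` is the half-turn and the
diagonal is a diameter; rotating that diameter by `2π/k` with `k ≥ 3` produces a distinct, crossing
diagonal of the same triangulation. Hence for `k ≠ 2` the cyclic group generated by the rotation
by `2π/k` acts freely on the `km - 3` diagonals, so `k ∣ km - 3`, i.e. `k ∣ 3`. -/

open Pointwise

theorem Finset.natCard_dvd_card_of_free_vadd {G α : Type*} [AddGroup G]
    [AddAction G α] (s : Finset α) (hs : ∀ g : G, ∀ x ∈ s, g +ᵥ x ∈ s)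
    (hfree : ∀ g : G, ∀ x ∈ s, g +ᵥ x = x → g = 0) :
    Nat.card G ∣ s.card := by
  let S : SubAddAction G α := ⟨s, fun {g x} hx => hs g x hx⟩
  have hstab : ∀ x : S, AddAction.stabilizer G x = ⊥ := fun x =>
    (AddSubgroup.eq_bot_iff_forall _).2 fun g hg => hfree g x x.2 (congrArg Subtype.val hg)
  have hcard := Nat.card_congr (AddAction.selfEquivOrbitsQuotientProd hstab)
  rw [Nat.card_prod] at hcard
  have hS : Nat.card S = s.card := Nat.card_eq_finsetCard s
  exact ⟨_, hS ▸ hcard.trans (mul_comm _ _)⟩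

theorem Finset.add_eq_of_vadd_pair_eq {α : Type*} [AddGroup α] [DecidableEq α] {g a b : α}
    (hg : g ≠ 0) (h : g +ᵥ ({a, b} : Finset α) = {a, b}) : g + a = b ∧ g + b = a := by
  have hmem : ∀ x ∈ ({a, b} : Finset α), g + x = a ∨ g + x = b := fun x hx => by
    have hgx := Finset.vadd_mem_vadd_finset (a := g) hx
    rw [h] at hgx
    simpa using hgx
  have hne : ∀ x : α, g + x ≠ x := fun x => by simpa using hg
  rcases hmem a (by simp) with ha | ha
  · exact absurd ha (hne a)
  rcases hmem b (by simp) with hb | hb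
  · exact ⟨ha, hb⟩
  · exact absurd hb (hne b)

theorem Fin.two_mul_val_eq_of_add_self_eq_zero {n : ℕ} [NeZero n] {g : Fin n} (hg : g ≠ 0)
    (hgg : g + g = 0) : 2 * g.val = n := by
  have hmod := congrArg Fin.val hgg
  rw [Fin.val_add, Fin.val_zero] at hmod
  have hg0 := Fin.val_ne_zero_iff.2 hg
  have := Nat.eq_of_dvd_of_lt_two_mul (by omega) (Nat.dvd_of_mod_eq_zero hmod) (by omega)
  omega

theorem polyCross_vadd_of_add_self_eq_zero {n : ℕ} [NeZero n] {a h s : Fin n} (hh : h + h = 0)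
    (hs : 0 < s.val) (hsh : s.val < h.val) :
    PolyCross n {a, h + a} (s +ᵥ {a, h + a}) := by
  have hneg : -h = h := neg_eq_of_add_eq_zero_right hh
  refine ⟨a, h + a, s + a, s + (h + a), rfl, by simp [Finset.vadd_finset_insert], ?_, ?_⟩ <;>
    simp [PolyBtw, sub_add_cancel_right, hneg, hs, hsh]

theorem PolyTriangulation.vadd_ne_self {n : ℕ} [NeZero n] (T : PolyTriangulation n) {s g : Fin n}
    (hs : s +ᵥ T.diags = T.diags) (hs0 : 0 < s.val) (hsn : 2 * s.val < n) (hg : g ≠ 0)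
    {e : Finset (Fin n)} (he : e ∈ T.diags) : g +ᵥ e ≠ e := by
  intro hfix
  obtain ⟨a, b, rfl, -, -⟩ := T.isDiag e he
  obtain ⟨rfl, hb⟩ := Finset.add_eq_of_vadd_pair_eq hg hfix
  have hgg : g + g = 0 := by rwa [← add_assoc, add_eq_right] at hb
  have hgn := Fin.two_mul_val_eq_of_add_self_eq_zero hg hgg
  have hse : s +ᵥ {a, g + a} ∈ T.diags := hs ▸ Finset.vadd_mem_vadd_finset he
  have hne : s +ᵥ {a, g + a} ≠ {a, g + a} := fun hsfix => by
    obtain ⟨hsa, -⟩ := Finset.add_eq_of_vadd_pair_eq (Fin.val_pos_iff.1 hs0).ne' hsfix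
    rw [add_left_inj] at hsa
    omega
  exact T.noncross _ he _ hse hne.symm (polyCross_vadd_of_add_self_eq_zero hgg hs0 (by omega))

theorem Fin.val_nsmul {n : ℕ} [NeZero n] (i : ℕ) (r : Fin n) : (i • r).val = i * r.val % n := by
  induction i with
  | zero => simp
  | succ i ih => rw [succ_nsmul, Fin.val_add, ih, Nat.mod_add_mod, add_mul, one_mul]

theorem Fin.addOrderOf_eq_of_mul_val_eq {n k : ℕ} [NeZero n] {r : Fin n} (h : k * r.val = n) :
    addOrderOf r = k := by
  have hn := NeZero.ne n
  have hk : 0 < k := Nat.pos_of_ne_zero fun hk => by simp [hk] at h; omega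
  have hr : 0 < r.val := Nat.pos_of_ne_zero fun hr => by simp [hr] at h; omega
  refine (addOrderOf_eq_iff hk).2 ⟨Fin.ext ?_, fun i hik hi hir => ?_⟩
  · rw [Fin.val_nsmul, h, Nat.mod_self, Fin.val_zero]
  · have hlt : i * r.val < n := (Nat.mul_lt_mul_of_pos_right hik hr).trans_eq h
    have := congrArg Fin.val hir
    rw [Fin.val_nsmul, Nat.mod_eq_of_lt hlt, Fin.val_zero] at this
    exact (Nat.mul_pos hi hr).ne' this

/-- If a triangulation of a regular `k*m`-gon is invariant under all rotations by
`2πi/k`, `i = 1, …, k-1` (rotation by `2πi/k` shifts every vertex index by `i*m`),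
then `k = 2` or `k = 3`. -/
theorem symmetric_triangulation_two_or_three (k m : ℕ) (hk : 2 ≤ k)
    (hn : 3 ≤ k * m) (T : PolyTriangulation (k * m))
    (hsym : ∀ i : ℕ, 1 ≤ i → i < k →
      T.diags.image (fun e => e.image (· + (⟨(i * m) % (k * m), Nat.mod_lt _ (by omega)⟩ : Fin (k * m)))) = T.diags) :
    k = 2 ∨ k = 3 := by
  have : NeZero (k * m) := ⟨by omega⟩
  rcases eq_or_ne k 2 with rfl | hk2
  · exact Or.inl rfl
  have hk3 : 3 ≤ k := by omega
  have hm : 0 < m := Nat.pos_of_ne_zero (by rintro rfl; simp at hn)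
  set r : Fin (k * m) := ⟨(1 * m) % (k * m), Nat.mod_lt _ (by omega)⟩
  have hrm : r.val = m := (Nat.mod_eq_of_lt (show 1 * m < k * m by nlinarith)).trans (one_mul m)
  have hrot : r +ᵥ T.diags = T.diags := by
    have hshift : (fun e : Finset (Fin (k * m)) => r +ᵥ e) = fun e => e.image (· + r) :=
      funext fun e => by simp only [Finset.vadd_finset_def, vadd_eq_add, add_comm r]
    rw [Finset.vadd_finset_def, hshift]
    exact hsym 1 le_rfl (by omega)
  have hstab : AddSubgroup.zmultiples r ≤ AddAction.stabilizer (Fin (k * m)) T.diags :=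
    AddSubgroup.zmultiples_le.2 hrot
  have hdvd : Nat.card (AddSubgroup.zmultiples r) ∣ T.diags.card := by
    refine Finset.natCard_dvd_card_of_free_vadd T.diags (fun g e he => ?_)
      (fun g e he hfix => ?_)
    · exact hstab g.2 ▸ Finset.vadd_mem_vadd_finset he
    · by_contra hg
      exact T.vadd_ne_self hrot (by omega) (by nlinarith) (g := g) (by simpa using hg) he hfix
  rw [Nat.card_zmultiples, Fin.addOrderOf_eq_of_mul_val_eq (k := k) (by rw [hrm]),
    T.card_diags] at hdvd
  have h3 : k ∣ 3 := by simpa [Nat.sub_sub_self hn] using Nat.dvd_sub (dvd_mul_right k m) hdvd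
  have := Nat.le_of_dvd three_pos h3
  omega
end

section
/- Let e_n be the number of Z_3-symmetric non-crossing perfect matchings of the sides of a regular 6n-gon with one marked side (genus-zero pairwise side gluings invariant under rotation by 2π/3). Then e_n = binom(2n, n). -/
/-!
Call a side `x` an *opener* when its partner is reached from `x` by a counterclockwise arc of
fewer than `3n` steps. A diameter would cross its own rotation by `2π/3`, so in a symmetric
gluing every chord has exactly one opener endpoint, and the opener word is `2n`-periodic with
`n` openers per period. Conversely, a `2n`-periodic word with `n` up-steps per period defines a
gluing by bracket matching: an up-step is glued to the first step after which the height returns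
to its level. Since non-crossing chords nest like brackets, reading off the opener word and
bracket matching are mutually inverse, so the gluings correspond to the `n`-element subsets of
`{0, …, 2n - 1}`.
-/

open Finset

section Circle

variable {m : ℕ}

theorem PolyBtw.ne_right {a b c : Fin m} (h : PolyBtw m a c b) : c ≠ b := by
  rintro rfl; exact h.2.false

variable [NeZero m]

theorem Fin.val_sub_pos {a b : Fin m} (h : a ≠ b) : 0 < (a - b).val :=
  Nat.pos_of_ne_zero fun h0 => h (sub_eq_zero.1 (Fin.ext h0))

theorem Fin.val_sub_add_val_sub {a b : Fin m} (h : a ≠ b) : (a - b).val + (b - a).val = m := by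
  rw [← neg_sub a b, Fin.val_neg, if_neg (sub_ne_zero.2 h)]
  have := (a - b).isLt
  omega

theorem Fin.val_sub_eq_add_or (a b c : Fin m) :
    (c - a).val = (c - b).val + (b - a).val ∨ (c - a).val + m = (c - b).val + (b - a).val := by
  rw [← sub_add_sub_cancel c b a, Fin.val_add]
  have := (c - b).isLt; have := (b - a).isLt
  rcases lt_or_ge ((c - b).val + (b - a).val) m with h | h
  · exact .inl (Nat.mod_eq_of_lt h)
  · right; rw [Nat.mod_eq_sub_mod h, Nat.mod_eq_of_lt (by omega)]; omega

open Fin.CommRing in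
theorem Fin.val_natCast_sub_natCast {i j : ℕ} (hij : i ≤ j) (hji : j < i + m) :
    ((j : Fin m) - (i : Fin m)).val = j - i := by
  rw [← Nat.cast_sub hij, Fin.val_natCast, Nat.mod_eq_of_lt (by omega)]

open Fin.CommRing in
theorem Fin.val_natCast_sub {x : Fin m} {k : ℕ} (h : x.val ≤ k)
    (h' : k < x.val + m) : ((k : Fin m) - x).val = k - x.val := by
  conv_lhs => rw [← Fin.cast_val_eq_self x]
  exact Fin.val_natCast_sub_natCast h h'

theorem PolyBtw.ne_left {a b c : Fin m} (h : PolyBtw m a c b) : c ≠ a := by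
  rintro rfl; simp [PolyBtw] at h

theorem PolyBtw.ne {a b c : Fin m} (h : PolyBtw m a c b) : a ≠ b := by
  rintro rfl; simp [PolyBtw] at h

theorem PolyBtw.not_polyBtw_swap {a b c : Fin m} (h : PolyBtw m a c b) :
    ¬ PolyBtw m b c a := by
  intro h'
  have := Fin.val_sub_add_val_sub h.ne
  rcases Fin.val_sub_eq_add_or a b c with h1 | h1 <;> simp only [PolyBtw] at h h' <;> omega

theorem polyBtw_or_polyBtw_swap {a b c : Fin m} (hab : a ≠ b) (hca : c ≠ a)
    (hcb : c ≠ b) : PolyBtw m a c b ∨ PolyBtw m b c a := by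
  have := Fin.val_sub_add_val_sub hab
  have := Fin.val_sub_pos hca
  have := Fin.val_sub_pos hcb
  have := (c - b).isLt
  unfold PolyBtw
  rcases Fin.val_sub_eq_add_or a b c with h1 | h1 <;> omega

theorem polyBtw_apply_swap {π : Fin m → Fin m} (hπ : Function.Involutive π) {b : Fin m}
    (h : ∀ c, PolyBtw m b c (π b) → PolyBtw m b (π c) (π b)) {c : Fin m}
    (hc : PolyBtw m (π b) c b) : PolyBtw m (π b) (π c) b := by
  have hcb : π c ≠ b := fun he => hc.ne_left (by rw [← he, hπ])
  have hcpb : π c ≠ π b := fun he => hc.ne_right (hπ.injective he)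
  refine (polyBtw_or_polyBtw_swap hc.ne hcpb hcb).resolve_right fun h' => ?_
  exact hc.not_polyBtw_swap (hπ c ▸ h _ h')

open Fin.CommRing in
theorem polyBtw_natCast_add_iff (o : ℕ) {s d : ℕ} (hs : s < m) (hd : d < m) :
    PolyBtw m (o : Fin m) ((o + s : ℕ) : Fin m) ((o + d : ℕ) : Fin m) ↔ 0 < s ∧ s < d := by
  simp only [PolyBtw, Nat.cast_add, add_sub_cancel_left, Fin.val_natCast, Nat.mod_eq_of_lt hs,
    Nat.mod_eq_of_lt hd]

end Circle

section Pairs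

variable {α : Type*} [DecidableEq α] {π : α → α}

theorem eq_apply_of_pair_eq (hπ : Function.Involutive π) {a b x : α}
    (h : ({a, b} : Finset α) = {x, π x}) (hab : a ≠ b) : b = π a := by
  have ha : a ∈ ({x, π x} : Finset α) := h ▸ mem_insert_self a {b}
  have hb : b ∈ ({x, π x} : Finset α) := h ▸ mem_insert_of_mem (mem_singleton_self b)
  simp only [mem_insert, mem_singleton] at ha hb
  rcases ha with rfl | rfl <;> rcases hb with rfl | rfl <;> simp_all [hπ _]

theorem pair_apply_eq_of_mem (hπ : Function.Involutive π) {x z : α}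
    (hz : z ∈ ({x, π x} : Finset α)) : ({x, π x} : Finset α) = {z, π z} := by
  simp only [mem_insert, mem_singleton] at hz
  rcases hz with rfl | rfl
  · rfl
  · rw [hπ x, pair_comm]

end Pairs

section Counting

theorem Nat.count_mul_of_periodic {p : ℕ → Prop} [DecidablePred p] {a : ℕ}
    (hp : Function.Periodic p a) (q : ℕ) : Nat.count p (q * a) = q * Nat.count p a := by
  induction q with
  | zero => simp
  | succ q ih =>
    have hshift (k : ℕ) : p (a + k) ↔ p k := by rw [add_comm, hp]
    rw [add_one_mul, add_comm, Nat.count_add]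
    simp only [hshift, ih, add_one_mul, add_comm]

theorem Fin.card_filter_val_eq_count {m : ℕ} (p : ℕ → Prop) [DecidablePred p] :
    #(univ.filter fun x : Fin m => p x.val) = Nat.count p m := by
  rw [Nat.count_eq_card_filter_range, ← card_map Fin.valEmbedding]
  congr 1
  ext k
  simp only [mem_map, mem_filter, mem_univ, true_and, Fin.valEmbedding_apply, mem_range]
  exact ⟨fun ⟨x, hx, hxk⟩ => hxk ▸ ⟨x.isLt, hx⟩, fun ⟨hk, hpk⟩ => ⟨⟨k, hk⟩, hpk, rfl⟩⟩

variable {α : Type*} [LinearOrder α] {A : Finset α} {σ : α → α}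

theorem card_filter_lt_apply_lt_le (hσ : ∀ k ∈ A, σ k ∈ A) (hσσ : ∀ k ∈ A, σ (σ k) = k) (c : α) :
    #(A.filter fun k => k < c ∧ σ k < k) ≤ #(A.filter fun k => k < c ∧ k < σ k) := by
  refine card_le_card_of_injOn σ (fun k hk => ?_) fun k hk j hj hkj => ?_
  · simp only [coe_filter, Set.mem_ofPred_eq] at hk ⊢
    exact ⟨hσ k hk.1, hk.2.2.trans hk.2.1, by rw [hσσ k hk.1]; exact hk.2.2⟩
  · simp only [coe_filter, Set.mem_ofPred_eq] at hk hj
    rw [← hσσ k hk.1, hkj, hσσ j hj.1]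

theorem card_filter_apply_lt_eq (hσ : ∀ k ∈ A, σ k ∈ A) (hσσ : ∀ k ∈ A, σ (σ k) = k) :
    #(A.filter fun k => σ k < k) = #(A.filter fun k => k < σ k) := by
  refine card_nbij' σ σ (fun k hk => ?_) (fun k hk => ?_) (fun k hk => ?_) fun k hk => ?_ <;>
    simp only [coe_filter, Set.mem_ofPred_eq] at hk ⊢
  · exact ⟨hσ k hk.1, by rw [hσσ k hk.1]; exact hk.2⟩
  · exact ⟨hσ k hk.1, by rw [hσσ k hk.1]; exact hk.2⟩
  · exact hσσ k hk.1
  · exact hσσ k hk.1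

end Counting

namespace PolyNCMatching

variable {m : ℕ}

theorem ext {M M' : PolyNCMatching m} (h : M.pairs = M'.pairs) : M = M' := by
  cases M; cases M'; cases h; rfl

section Partner

variable (M : PolyNCMatching m)

theorem exists_ne_pair_mem (x : Fin m) : ∃ y, y ≠ x ∧ {x, y} ∈ M.pairs := by
  obtain ⟨e, he, hxe⟩ := M.cover x
  obtain ⟨u, v, huv, rfl⟩ := card_eq_two.1 (M.card_two e he)
  simp only [mem_insert, mem_singleton] at hxe
  rcases hxe with rfl | rfl
  · exact ⟨v, huv.symm, he⟩
  · exact ⟨u, huv, pair_comm x u ▸ he⟩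

noncomputable def partner (x : Fin m) : Fin m := (M.exists_ne_pair_mem x).choose

theorem partner_ne (x : Fin m) : M.partner x ≠ x := (M.exists_ne_pair_mem x).choose_spec.1

theorem pair_partner_mem (x : Fin m) : {x, M.partner x} ∈ M.pairs :=
  (M.exists_ne_pair_mem x).choose_spec.2

theorem eq_pair_partner {e : Finset (Fin m)} (he : e ∈ M.pairs) {x : Fin m} (hx : x ∈ e) :
    e = {x, M.partner x} := by
  by_contra hne
  exact disjoint_left.1 (M.disj e he _ (M.pair_partner_mem x) hne) hx (mem_insert_self x _)

theorem partner_eq_of_pair_mem {x y : Fin m} (h : {x, y} ∈ M.pairs) (hyx : y ≠ x) :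
    M.partner x = y := by
  have hy : y ∈ ({x, M.partner x} : Finset (Fin m)) :=
    M.eq_pair_partner h (mem_insert_self x _) ▸ mem_insert_of_mem (mem_singleton_self y)
  simp only [mem_insert, mem_singleton] at hy
  exact (hy.resolve_left hyx).symm

theorem partner_involutive : Function.Involutive M.partner := fun x =>
  M.partner_eq_of_pair_mem (pair_comm x _ ▸ M.pair_partner_mem x) (M.partner_ne x).symm

theorem pairs_eq_image_partner : M.pairs = univ.image fun x => {x, M.partner x} := by
  ext e
  simp only [mem_image, mem_univ, true_and]
  constructor
  · intro he
    obtain ⟨x, hx⟩ := card_pos.1 (by rw [M.card_two e he]; norm_num)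
    exact ⟨x, (M.eq_pair_partner he hx).symm⟩
  · rintro ⟨x, rfl⟩
    exact M.pair_partner_mem x

theorem ext_of_partner {M M' : PolyNCMatching m} (h : M.partner = M'.partner) : M = M' :=
  ext (by rw [pairs_eq_image_partner, pairs_eq_image_partner, h])

theorem polyBtw_partner [NeZero m] {a c : Fin m} (h : PolyBtw m a c (M.partner a)) :
    PolyBtw m a (M.partner c) (M.partner a) := by
  have hinj := M.partner_involutive.injective
  have hca : M.partner c ≠ a := fun he => h.ne_right (by rw [← he, M.partner_involutive])
  have hcpa : M.partner c ≠ M.partner a := fun he => h.ne_left (hinj he)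
  refine (polyBtw_or_polyBtw_swap h.ne hca hcpa).resolve_right fun h' => ?_
  have hne : ({a, M.partner a} : Finset (Fin m)) ≠ {c, M.partner c} := fun he => by
    have hc : c ∈ ({a, M.partner a} : Finset (Fin m)) := he ▸ mem_insert_self c _
    simp only [mem_insert, mem_singleton] at hc
    exact hc.elim h.ne_left h.ne_right
  exact M.noncross _ (M.pair_partner_mem a) _ (M.pair_partner_mem c) hne
    ⟨a, _, c, _, rfl, rfl, h, h'⟩

theorem image_add_pairs_eq_iff [NeZero m] (r : Fin m) :
    M.pairs.image (fun e => e.image (· + r)) = M.pairs ↔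
      ∀ x, M.partner (x + r) = M.partner x + r := by
  constructor
  · intro h x
    have hmem :=
      h ▸ mem_image_of_mem (fun e : Finset (Fin m) => e.image (· + r)) (M.pair_partner_mem x)
    rw [image_insert, image_singleton] at hmem
    exact M.partner_eq_of_pair_mem hmem (by simpa using M.partner_ne x)
  · intro h
    conv_lhs => rw [pairs_eq_image_partner, image_image]
    conv_rhs => rw [pairs_eq_image_partner]
    ext e
    simp only [mem_image, mem_univ, true_and, Function.comp_apply, image_insert, image_singleton,
      ← h]
    constructor
    · rintro ⟨x, rfl⟩; exact ⟨x + r, rfl⟩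
    · rintro ⟨y, rfl⟩; exact ⟨y - r, by rw [sub_add_cancel]⟩

end Partner

section OfInvolution

variable [NeZero m] {π : Fin m → Fin m}

def ofInvolution (hπ : Function.Involutive π) (hfix : ∀ x, π x ≠ x)
    (harc : ∀ a c, PolyBtw m a c (π a) → PolyBtw m a (π c) (π a)) : PolyNCMatching m where
  pairs := univ.image fun x => {x, π x}
  card_two := by
    simp only [mem_image, mem_univ, true_and, forall_exists_index, forall_apply_eq_imp_iff]
    exact fun x => card_pair (hfix x).symm
  disj := by
    simp only [mem_image, mem_univ, true_and, forall_exists_index, forall_apply_eq_imp_iff]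
    intro x y hne
    refine disjoint_left.2 fun z hzx hzy => hne ?_
    rw [pair_apply_eq_of_mem hπ hzx, pair_apply_eq_of_mem hπ hzy]
  cover x := ⟨{x, π x}, mem_image_of_mem _ (mem_univ x), mem_insert_self x _⟩
  noncross := by
    simp only [mem_image, mem_univ, true_and, forall_exists_index, forall_apply_eq_imp_iff]
    rintro x y - ⟨a, b, c, d, he, hf, hac, hbd⟩
    have hcd : c ≠ d := by rintro rfl; exact hac.not_polyBtw_swap hbd
    obtain rfl := eq_apply_of_pair_eq hπ he.symm hac.ne
    obtain rfl := eq_apply_of_pair_eq hπ hf.symm hcd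
    exact (harc a c hac).not_polyBtw_swap hbd

theorem partner_ofInvolution (hπ : Function.Involutive π) (hfix : ∀ x, π x ≠ x)
    (harc : ∀ a c, PolyBtw m a c (π a) → PolyBtw m a (π c) (π a)) :
    (ofInvolution hπ hfix harc).partner = π :=
  funext fun x => partner_eq_of_pair_mem _ (mem_image_of_mem _ (mem_univ x)) (hfix x)

end OfInvolution

section Opener

open Fin.CommRing

variable [NeZero m] (M : PolyNCMatching m)

def IsOpener (x : Fin m) : Prop := 2 * (M.partner x - x).val < m

noncomputable instance : DecidablePred M.IsOpener := fun x =>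
  inferInstanceAs (Decidable (2 * (M.partner x - x).val < m))

theorem val_sub_partner_add (x : Fin m) :
    (x - M.partner x).val + (M.partner x - x).val = m :=
  Fin.val_sub_add_val_sub (M.partner_ne x).symm

theorem not_isOpener_partner {x : Fin m} (hx : M.IsOpener x) : ¬ M.IsOpener (M.partner x) := by
  have := M.val_sub_partner_add x
  unfold IsOpener at *
  rw [M.partner_involutive]
  omega

theorem isOpener_or_isOpener_partner {x : Fin m} (hx : 2 * (M.partner x - x).val ≠ m) :
    M.IsOpener x ∨ M.IsOpener (M.partner x) := by
  have := M.val_sub_partner_add x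
  unfold IsOpener
  rw [M.partner_involutive]
  omega

-- A diameter would cross its rotation by `r`.
theorem two_mul_val_sub_partner_ne {r : Fin m} (hM : ∀ x, M.partner (x + r) = M.partner x + r)
    (hr : 0 < r.val) (hr' : 2 * r.val < m) (x : Fin m) : 2 * (M.partner x - x).val ≠ m := by
  intro hdiam
  have := M.val_sub_partner_add x
  have hin : PolyBtw m x (x + r) (M.partner x) := by
    simp only [PolyBtw, add_sub_cancel_left]; omega
  refine (M.polyBtw_partner hin).not_polyBtw_swap ?_
  simp only [PolyBtw, hM, add_sub_cancel_left]
  omega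

theorem two_mul_card_isOpener (hdiam : ∀ x, 2 * (M.partner x - x).val ≠ m) :
    2 * #(univ.filter M.IsOpener) = m := by
  set O := univ.filter M.IsOpener
  have hdisj : Disjoint O (O.image M.partner) := by
    simp only [O, disjoint_left, mem_filter, mem_univ, true_and, mem_image, not_exists, not_and]
    exact fun x hx y hy hyx => M.not_isOpener_partner hy (hyx ▸ hx)
  have hcover : O ∪ O.image M.partner = univ := by
    refine eq_univ_of_forall fun x => ?_
    simp only [O, mem_union, mem_filter, mem_univ, true_and, mem_image]
    exact (M.isOpener_or_isOpener_partner (hdiam x)).imp id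
      fun h => ⟨_, h, M.partner_involutive x⟩
  have := card_union_of_disjoint hdisj
  rw [hcover, card_univ, Fintype.card_fin,
    card_image_of_injective _ M.partner_involutive.injective] at this
  omega

theorem isOpener_add_iff {r : Fin m} (hM : ∀ x, M.partner (x + r) = M.partner x + r) (x : Fin m) :
    M.IsOpener (x + r) ↔ M.IsOpener x := by
  simp only [IsOpener, hM, add_sub_add_right_eq_sub]

-- Lifting partners into `[x, x + m)` turns the arc from `x` to its partner into an interval.
noncomputable def liftPartner (x : Fin m) (k : ℕ) : ℕ := x.val + (M.partner k - x).val

theorem natCast_liftPartner (x : Fin m) (k : ℕ) :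
    (M.liftPartner x k : Fin m) = M.partner k := by
  simp [liftPartner]

theorem liftPartner_ne (x : Fin m) (k : ℕ) : M.liftPartner x k ≠ k := fun h =>
  M.partner_ne k (by rw [← natCast_liftPartner, h])

variable {M} {x : Fin m} {k : ℕ} (hk : x.val < k ∧ k < x.val + (M.partner x - x).val)
include hk

theorem polyBtw_natCast_partner : PolyBtw m x (k : Fin m) (M.partner x) := by
  have := (M.partner x - x).isLt
  rw [PolyBtw, Fin.val_natCast_sub hk.1.le (by omega)]
  omega

theorem liftPartner_mem_Ioo :
    x.val < M.liftPartner x k ∧ M.liftPartner x k < x.val + (M.partner x - x).val := by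
  have := M.polyBtw_partner (polyBtw_natCast_partner hk)
  simp only [PolyBtw, liftPartner] at this ⊢
  omega

theorem liftPartner_liftPartner : M.liftPartner x (M.liftPartner x k) = k := by
  have := (M.partner x - x).isLt
  rw [liftPartner, natCast_liftPartner, M.partner_involutive,
    Fin.val_natCast_sub hk.1.le (by omega)]
  omega

theorem isOpener_natCast_iff (hx : M.IsOpener x) :
    M.IsOpener (k : Fin m) ↔ k < M.liftPartner x k := by
  have hσ := liftPartner_mem_Ioo hk
  have hne : ((M.liftPartner x k : ℕ) : Fin m) ≠ k := by
    rw [natCast_liftPartner]; exact M.partner_ne k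
  have := (M.partner x - x).isLt
  unfold IsOpener at hx ⊢
  rw [← natCast_liftPartner]
  rcases lt_or_ge k (M.liftPartner x k) with hlt | hge
  · rw [Fin.val_natCast_sub_natCast hlt.le (by omega)]
    omega
  · have hsum := Fin.val_sub_add_val_sub hne
    rw [Fin.val_natCast_sub_natCast hge (by omega)] at hsum
    have := M.liftPartner_ne x k
    omega

end Opener

end PolyNCMatching

theorem lt_iff_lt_of_forall_ne {f : ℕ → ℤ} (hf : ∀ k, |f (k + 1) - f k| ≤ 1) {t : ℤ} {a b : ℕ}
    (hab : a ≤ b) (hne : ∀ k ∈ Icc a b, f k ≠ t) : t < f a ↔ t < f b := by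
  induction b, hab using Nat.le_induction with
  | base => rfl
  | succ b hab ih =>
    rw [ih fun k hk => hne k (Icc_subset_Icc_right b.le_succ hk)]
    have h1 := hne b (by simp [hab])
    have h2 := hne (b + 1) (by simp only [mem_Icc]; omega)
    have := abs_le.1 (hf b)
    omega

namespace PeriodicWord

open Fin.CommRing

variable (n : ℕ) (S : Finset ℕ) (N : ℕ) [NeZero N]

def IsUp (k : ℕ) : Prop := k % (2 * n) ∈ S

instance : DecidablePred (IsUp n S) := fun k => inferInstanceAs (Decidable (k % (2 * n) ∈ S))

def height (k : ℕ) : ℤ := ∑ j ∈ range k, if IsUp n S j then 1 else -1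

-- Junk value `0` where the height never returns; at up-steps it returns within one period.
noncomputable def matchDist (i : ℕ) : ℕ := sInf {d | 0 < d ∧ height n S (i + d + 1) = height n S i}

def matchStart (j : ℕ) : ℕ := Nat.findGreatest (fun o => height n S o = height n S (j + 1)) j

-- A down-step is lifted by `N` so that `matchStart` can search back through a whole period.
noncomputable def matchPartner (x : Fin N) : Fin N :=
  if IsUp n S x.val then ((x.val + matchDist n S x.val : ℕ) : Fin N)
  else (matchStart n S (x.val + N) : Fin N)

variable {n S N}

theorem isUp_add_of_dvd {c : ℕ} (hc : 2 * n ∣ c) (k : ℕ) : IsUp n S (k + c) ↔ IsUp n S k := by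
  obtain ⟨q, rfl⟩ := hc
  simp [IsUp, Nat.add_mul_mod_self_left]

theorem height_succ (k : ℕ) :
    height n S (k + 1) = height n S k + if IsUp n S k then 1 else -1 :=
  sum_range_succ _ k

theorem abs_height_succ_sub_le (k : ℕ) : |height n S (k + 1) - height n S k| ≤ 1 := by
  rw [height_succ]; split_ifs <;> simp

theorem height_succ_of_isUp {k : ℕ} (hk : IsUp n S k) : height n S (k + 1) = height n S k + 1 := by
  rw [height_succ, if_pos hk]

theorem height_succ_of_not_isUp {k : ℕ} (hk : ¬ IsUp n S k) :
    height n S (k + 1) = height n S k - 1 := by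
  rw [height_succ, if_neg hk, sub_eq_add_neg]

theorem isUp_of_height_succ_gt {k : ℕ} (h : height n S k < height n S (k + 1)) : IsUp n S k := by
  by_contra hk; rw [height_succ_of_not_isUp hk] at h; omega

theorem height_sub_height {a b : ℕ} (hab : a ≤ b) :
    height n S b - height n S a =
      #((Ico a b).filter (IsUp n S)) - #((Ico a b).filter fun k => ¬ IsUp n S k) := by
  rw [height, height, ← sum_Ico_eq_sub _ hab, sum_ite, sum_const, sum_const]
  simp [sub_eq_add_neg]

theorem matchDist_eq {i d : ℕ} (hd : 0 < d) (hret : height n S (i + d + 1) = height n S i)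
    (hne : ∀ e, 0 < e → e < d → height n S (i + e + 1) ≠ height n S i) : matchDist n S i = d := by
  refine le_antisymm (Nat.sInf_le ⟨hd, hret⟩) (not_lt.1 fun hlt => ?_)
  obtain ⟨hpos, heq⟩ := Nat.sInf_mem (s := {d | 0 < d ∧ height n S (i + d + 1) = height n S i})
    ⟨d, hd, hret⟩
  exact hne _ hpos hlt heq

theorem height_ne_of_lt_matchDist {i e : ℕ} (he : 0 < e) (hlt : e < matchDist n S i) :
    height n S (i + e + 1) ≠ height n S i :=
  fun h => Nat.notMem_of_lt_sInf hlt ⟨he, h⟩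

theorem lt_height_of_le_matchDist {i e : ℕ} (hi : IsUp n S i) (he : 0 < e)
    (hle : e ≤ matchDist n S i) :
    height n S i < height n S (i + e) := by
  refine (lt_iff_lt_of_forall_ne abs_height_succ_sub_le (by omega : i + 1 ≤ i + e)
    fun k hk => ?_).1 (by rw [height_succ_of_isUp hi]; omega)
  obtain ⟨hk1, hk2⟩ := mem_Icc.1 hk
  obtain ⟨e', rfl⟩ := Nat.exists_eq_add_of_le hk1
  rcases Nat.eq_zero_or_pos e' with rfl | he'
  · rw [height_succ_of_isUp hi]; omega
  · rw [show i + 1 + e' = i + e' + 1 by omega]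
    exact height_ne_of_lt_matchDist he' (by omega)

section Window

variable {a b : ℕ} {σ : ℕ → ℕ} (hσ : ∀ k ∈ Ico a b, σ k ∈ Ico a b)
  (hσσ : ∀ k ∈ Ico a b, σ (σ k) = k) (hfix : ∀ k ∈ Ico a b, σ k ≠ k)
  (hup : ∀ k ∈ Ico a b, IsUp n S k ↔ k < σ k)
include hfix hup

theorem height_sub_height_eq_of_involution {c : ℕ} (hac : a ≤ c) (hcb : c ≤ b) :
    height n S c - height n S a = #((Ico a b).filter fun k => k < c ∧ k < σ k) -
      #((Ico a b).filter fun k => k < c ∧ σ k < k) := by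
  have hdown : ∀ k ∈ Ico a b, ¬ IsUp n S k ↔ σ k < k := fun k hk => by
    have := hfix k hk
    rw [hup k hk]; omega
  have hIco : Ico a c = (Ico a b).filter (· < c) := by
    ext k; simp only [mem_filter, mem_Ico]; omega
  rw [height_sub_height hac, hIco, filter_filter, filter_filter,
    filter_congr fun k hk => and_congr_right fun _ => hup k hk,
    filter_congr fun k hk => and_congr_right fun _ => hdown k hk]

include hσ hσσ

theorem height_le_height_of_involution {c : ℕ} (hac : a ≤ c) (hcb : c ≤ b) :
    height n S a ≤ height n S c := by
  have := height_sub_height_eq_of_involution hfix hup hac hcb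
  have := card_filter_lt_apply_lt_le hσ hσσ c
  omega

theorem height_eq_height_of_involution (hab : a ≤ b) : height n S b = height n S a := by
  have h := height_sub_height_eq_of_involution hfix hup hab le_rfl
  have hlt : ∀ k ∈ Ico a b, k < b := fun k hk => (mem_Ico.1 hk).2
  rw [filter_congr fun k hk => and_iff_right (hlt k hk),
    filter_congr fun k hk => and_iff_right (hlt k hk), card_filter_apply_lt_eq hσ hσσ] at h
  omega

end Window

/- The arc from an opener `x` to its partner is closed under `M.partner` (non-crossing); inside
it the partner pairs each down-step with an earlier up-step, so the height stays above its level
at `x` until the partner is reached. -/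
theorem matchDist_eq_val_partner_sub {M : PolyNCMatching N}
    (hSM : ∀ k, IsUp n S k ↔ M.IsOpener (k : Fin N)) {x : Fin N} (hx : M.IsOpener x) :
    matchDist n S x.val = (M.partner x - x).val := by
  set a := x.val
  set t := (M.partner x - x).val
  set σ := M.liftPartner x
  have hwin : ∀ k ∈ Ico (a + 1) (a + t), a < k ∧ k < a + t := fun k hk => by
    simp only [mem_Ico] at hk; omega
  have hσ : ∀ k ∈ Ico (a + 1) (a + t), σ k ∈ Ico (a + 1) (a + t) := fun k hk => by
    obtain ⟨h1, h2⟩ : a < σ k ∧ σ k < a + t := M.liftPartner_mem_Ioo (hwin k hk)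
    simp only [mem_Ico]; omega
  have hσσ : ∀ k ∈ Ico (a + 1) (a + t), σ (σ k) = k := fun k hk =>
    M.liftPartner_liftPartner (hwin k hk)
  have hfix : ∀ k ∈ Ico (a + 1) (a + t), σ k ≠ k := fun k _ => M.liftPartner_ne x k
  have hup : ∀ k ∈ Ico (a + 1) (a + t), IsUp n S k ↔ k < σ k := fun k hk =>
    (hSM k).trans (M.isOpener_natCast_iff (hwin k hk) hx)
  have hxup : IsUp n S a := (hSM a).2 (by rwa [Fin.cast_val_eq_self])
  have hydown : ¬ IsUp n S (a + t) := by
    rw [hSM, show ((a + t : ℕ) : Fin N) = M.partner x by simp [a, t]]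
    exact M.not_isOpener_partner hx
  have ht : 0 < t := Fin.val_sub_pos (M.partner_ne x)
  refine matchDist_eq ht ?_ fun e he1 he2 => ?_
  · rw [height_succ_of_not_isUp hydown,
      height_eq_height_of_involution hσ hσσ hfix hup (by omega), height_succ_of_isUp hxup]
    ring
  · have := height_le_height_of_involution hσ hσσ hfix hup (c := a + e + 1) (by omega) (by omega)
    rw [height_succ_of_isUp hxup] at this
    omega

section Balanced

variable (hS : S ∈ powersetCard n (range (2 * n)))
include hS

theorem height_two_mul : height n S (2 * n) = 0 := by
  obtain ⟨hsub, hcard⟩ := mem_powersetCard.1 hS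
  have hfilter : (range (2 * n)).filter (IsUp n S) = S := by
    ext j
    simp only [mem_filter, mem_range, IsUp]
    exact ⟨fun ⟨hj, h⟩ => Nat.mod_eq_of_lt hj ▸ h,
      fun h => ⟨mem_range.1 (hsub h), (Nat.mod_eq_of_lt (mem_range.1 (hsub h))).symm ▸ h⟩⟩
  have hcompl := card_filter_add_card_filter_not (s := range (2 * n)) (p := IsUp n S)
  rw [hfilter, hcard, card_range] at hcompl
  rw [height, sum_ite, sum_const, sum_const, hfilter, hcard]
  simp only [nsmul_eq_mul, mul_one, mul_neg]
  omega

theorem height_add_two_mul (k : ℕ) : height n S (k + 2 * n) = height n S k := by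
  induction k with
  | zero => simpa [height] using height_two_mul hS
  | succ k ih =>
    rw [show k + 1 + 2 * n = k + 2 * n + 1 by omega, height_succ, height_succ, ih]
    simp only [isUp_add_of_dvd (dvd_refl _)]

theorem height_add_of_dvd {c : ℕ} (hc : 2 * n ∣ c) (k : ℕ) : height n S (k + c) = height n S k := by
  obtain ⟨q, rfl⟩ := hc
  induction q with
  | zero => simp
  | succ q ih => rw [mul_add_one, ← add_assoc, height_add_two_mul hS, ih]

theorem matchDist_add_of_dvd {c : ℕ} (hc : 2 * n ∣ c) (i : ℕ) :
    matchDist n S (i + c) = matchDist n S i := by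
  unfold matchDist
  congr 1
  ext d
  simp only [Set.mem_ofPred_eq]
  rw [show i + c + d + 1 = i + d + 1 + c by omega, height_add_of_dvd hS hc, height_add_of_dvd hS hc]

theorem matchStart_spec (hn : 0 < n) {j : ℕ} (hj : ¬ IsUp n S j) (hnj : 2 * n ≤ j) :
    IsUp n S (matchStart n S j) ∧ matchStart n S j + matchDist n S (matchStart n S j) = j := by
  set o := matchStart n S j
  have hper : height n S (j + 1 - 2 * n) = height n S (j + 1) := by
    rw [← height_add_two_mul hS (j + 1 - 2 * n), Nat.sub_add_cancel (by omega)]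
  have ho : height n S o = height n S (j + 1) :=
    Nat.findGreatest_spec (P := fun o => height n S o = height n S (j + 1)) (by omega) hper
  have hoj : o ≤ j := Nat.findGreatest_le j
  have hjump := height_succ_of_not_isUp hj
  have hlt : o < j := hoj.lt_of_ne fun h => by rw [h] at ho; omega
  have hne : ∀ k ∈ Icc (o + 1) j, height n S k ≠ height n S (j + 1) := fun k hk =>
    Nat.findGreatest_is_greatest
      (P := fun o => height n S o = height n S (j + 1)) (mem_Icc.1 hk).1 (mem_Icc.1 hk).2
  have hup : IsUp n S o := isUp_of_height_succ_gt <| ho ▸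
    (lt_iff_lt_of_forall_ne abs_height_succ_sub_le (by omega) hne).2 (by omega)
  refine ⟨hup, ?_⟩
  rw [matchDist_eq (d := j - o) (by omega) (by rw [show o + (j - o) + 1 = j + 1 by omega, ho])
    fun e he1 he2 => ho ▸ hne _ (by simp only [mem_Icc]; omega)]
  omega

section Up

variable {i : ℕ} (hi : IsUp n S i)
include hi

theorem pos_of_isUp : 0 < n := by
  obtain ⟨hsub, hcard⟩ := mem_powersetCard.1 hS
  exact hcard ▸ card_pos.2 ⟨_, hi⟩

theorem two_mul_sub_one_mem :
    2 * n - 1 ∈ {d | 0 < d ∧ height n S (i + d + 1) = height n S i} := by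
  have := pos_of_isUp hS hi
  refine ⟨by omega, ?_⟩
  rw [show i + (2 * n - 1) + 1 = i + 2 * n by omega, height_add_two_mul hS]

theorem matchDist_pos : 0 < matchDist n S i :=
  (Nat.sInf_mem ⟨_, two_mul_sub_one_mem hS hi⟩).1

theorem height_matchDist : height n S (i + matchDist n S i + 1) = height n S i :=
  (Nat.sInf_mem ⟨_, two_mul_sub_one_mem hS hi⟩).2

theorem matchDist_lt : matchDist n S i < 2 * n := by
  have := Nat.sInf_le (two_mul_sub_one_mem hS hi)
  have := pos_of_isUp hS hi
  unfold matchDist; omega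

theorem not_isUp_add_matchDist : ¬ IsUp n S (i + matchDist n S i) := fun hup => by
  have h1 := lt_height_of_le_matchDist hi (matchDist_pos hS hi) le_rfl
  have h2 := height_matchDist hS hi
  rw [height_succ_of_isUp hup] at h2
  omega

end Up

theorem lt_or_lt_of_isUp {i j : ℕ} (hi : IsUp n S i) (hj : IsUp n S j) (hij : i < j) :
    j + matchDist n S j < i + matchDist n S i ∨ i + matchDist n S i < j := by
  rcases lt_trichotomy j (i + matchDist n S i) with hlt | heq | hgt
  · left
    have hij' := lt_height_of_le_matchDist hi (by omega : 0 < j - i) (by omega)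
    rw [Nat.add_sub_cancel' hij.le] at hij'
    have hret := height_matchDist hS hi
    by_contra hle
    rcases (not_lt.1 hle).eq_or_lt with heq | hgt
    · have := height_matchDist hS hj
      rw [← heq] at this
      omega
    · have := lt_height_of_le_matchDist hj (by omega : 0 < i + matchDist n S i + 1 - j)
        (by omega)
      rw [show j + (i + matchDist n S i + 1 - j) = i + matchDist n S i + 1 by omega] at this
      omega
  · exact absurd (heq ▸ hj) (not_isUp_add_matchDist hS hi)
  · exact .inr hgt

theorem eq_of_add_matchDist_eq {i j : ℕ} (hi : IsUp n S i) (hj : IsUp n S j)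
    (h : i + matchDist n S i = j + matchDist n S j) : i = j := by
  by_contra hne
  rcases Nat.lt_or_gt_of_ne hne with hlt | hlt
  · have := lt_or_lt_of_isUp hS hi hj hlt
    have := matchDist_pos hS hj
    omega
  · have := lt_or_lt_of_isUp hS hj hi hlt
    have := matchDist_pos hS hi
    omega

end Balanced

section Matching

variable (hS : S ∈ powersetCard n (range (2 * n))) (hN : 2 * n ∣ N)

include hN in
theorem isUp_congr_natCast {a b : ℕ} (h : (a : Fin N) = b) : IsUp n S a ↔ IsUp n S b := by
  have hmod : a % N = b % N := by simpa [Fin.ext_iff, Fin.val_natCast] using h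
  simp only [IsUp, ← Nat.mod_mod_of_dvd a hN, ← Nat.mod_mod_of_dvd b hN, hmod]

include hS hN

theorem matchPartner_natCast_of_isUp {k : ℕ} (hk : IsUp n S k) :
    matchPartner n S N k = ((k + matchDist n S k : ℕ) : Fin N) := by
  have hdec : k = k % N + N * (k / N) := (Nat.mod_add_div k N).symm
  have hdvd : 2 * n ∣ N * (k / N) := hN.mul_right _
  have hup : IsUp n S (k % N) := by rwa [hdec, isUp_add_of_dvd hdvd] at hk
  rw [matchPartner, if_pos (by rwa [Fin.val_natCast]), Fin.val_natCast]
  conv_rhs => rw [hdec, matchDist_add_of_dvd hS hdvd]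
  simp

theorem matchPartner_natCast_add_matchDist {k : ℕ} (hk : IsUp n S k) :
    matchPartner n S N ((k + matchDist n S k : ℕ) : Fin N) = k := by
  set j := (k + matchDist n S k) % N
  have hdec : k + matchDist n S k = j + N * ((k + matchDist n S k) / N) :=
    (Nat.mod_add_div _ N).symm
  have hdvd : 2 * n ∣ N * ((k + matchDist n S k) / N) := hN.mul_right _
  have hdown : ¬ IsUp n S j := by
    rw [← isUp_add_of_dvd hdvd, ← hdec]; exact not_isUp_add_matchDist hS hk
  have hn := pos_of_isUp hS hk
  obtain ⟨hup, hret⟩ := matchStart_spec hS hn (j := j + N) (by rwa [isUp_add_of_dvd hN])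
    (by have := Nat.le_of_dvd (NeZero.pos N) hN; omega)
  set o := matchStart n S (j + N)
  have hshift : o + N * ((k + matchDist n S k) / N) = k + N := by
    refine eq_of_add_matchDist_eq hS ((isUp_add_of_dvd hdvd o).2 hup)
      ((isUp_add_of_dvd hN k).2 hk) ?_
    rw [matchDist_add_of_dvd hS hdvd, matchDist_add_of_dvd hS hN]
    omega
  rw [matchPartner, if_neg (by rwa [Fin.val_natCast]), Fin.val_natCast]
  calc ((o : ℕ) : Fin N) = ((o + N * ((k + matchDist n S k) / N) : ℕ) : Fin N) := by simp
    _ = k := by rw [hshift]; simp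

theorem exists_isUp_natCast_eq [NeZero n] (x : Fin N) :
    ∃ k, IsUp n S k ∧ ((k : Fin N) = x ∨ ((k + matchDist n S k : ℕ) : Fin N) = x) := by
  by_cases hx : IsUp n S x.val
  · exact ⟨x.val, hx, .inl (Fin.cast_val_eq_self x)⟩
  · obtain ⟨hup, hret⟩ := matchStart_spec hS (NeZero.pos n) (j := x.val + N)
      (by rwa [isUp_add_of_dvd hN]) (by have := Nat.le_of_dvd (NeZero.pos N) hN; omega)
    exact ⟨_, hup, .inr (by rw [hret]; simp)⟩

theorem matchPartner_involutive [NeZero n] : Function.Involutive (matchPartner n S N) := by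
  intro x
  obtain ⟨k, hk, rfl | rfl⟩ := exists_isUp_natCast_eq hS hN x
  · rw [matchPartner_natCast_of_isUp hS hN hk, matchPartner_natCast_add_matchDist hS hN hk]
  · rw [matchPartner_natCast_add_matchDist hS hN hk, matchPartner_natCast_of_isUp hS hN hk]

theorem natCast_add_matchDist_ne {k : ℕ} (hk : IsUp n S k) :
    ((k + matchDist n S k : ℕ) : Fin N) ≠ k := by
  intro h
  have hmod : matchDist n S k % N = 0 := by simpa [Fin.ext_iff, Fin.val_natCast] using h
  rw [Nat.mod_eq_of_lt ((matchDist_lt hS hk).trans_le (Nat.le_of_dvd (NeZero.pos N) hN))] at hmod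
  exact (matchDist_pos hS hk).ne' hmod

theorem matchPartner_ne [NeZero n] (x : Fin N) : matchPartner n S N x ≠ x := by
  obtain ⟨k, hk, rfl | rfl⟩ := exists_isUp_natCast_eq hS hN x
  · rw [matchPartner_natCast_of_isUp hS hN hk]; exact natCast_add_matchDist_ne hS hN hk
  · rw [matchPartner_natCast_add_matchDist hS hN hk]; exact (natCast_add_matchDist_ne hS hN hk).symm

theorem exists_matchPartner_eq_of_lt_matchDist {k s : ℕ} (hk : IsUp n S k) (hs : 0 < s)
    (hsd : s < matchDist n S k) :
    ∃ u, 0 < u ∧ u < matchDist n S k ∧ matchPartner n S N ((k + s : ℕ) : Fin N) = (k + u : ℕ) := by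
  by_cases hks : IsUp n S (k + s)
  · refine ⟨s + matchDist n S (k + s), ?_, ?_, ?_⟩
    · omega
    · have := lt_or_lt_of_isUp hS hk hks (by omega)
      omega
    · rw [matchPartner_natCast_of_isUp hS hN hks, add_assoc]
  · have hn := pos_of_isUp hS hk
    obtain ⟨hup, hret⟩ := matchStart_spec hS hn (j := k + s + N) (by rwa [isUp_add_of_dvd hN])
      (by have := Nat.le_of_dvd (NeZero.pos N) hN; omega)
    set o := matchStart n S (k + s + N)
    have hkN : IsUp n S (k + N) := (isUp_add_of_dvd hN k).2 hk
    have hdkN : matchDist n S (k + N) = matchDist n S k := matchDist_add_of_dvd hS hN k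
    have ho : k + N < o := by
      rcases lt_trichotomy o (k + N) with hlt | heq | hgt
      · have := lt_or_lt_of_isUp hS hup hkN hlt
        omega
      · rw [heq, hdkN] at hret
        omega
      · exact hgt
    refine ⟨o - (k + N), by omega, ?_, ?_⟩
    · have := lt_or_lt_of_isUp hS hkN hup ho
      omega
    · have hcast : ((k + s : ℕ) : Fin N) = ((o + matchDist n S o : ℕ) : Fin N) := by
        rw [hret]; simp
      rw [hcast, matchPartner_natCast_add_matchDist hS hN hup,
        show o = k + (o - (k + N)) + N by omega]
      simp

theorem polyBtw_matchPartner_natCast {k : ℕ} (hk : IsUp n S k) (c : Fin N)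
    (hc : PolyBtw N k c (matchPartner n S N k)) :
    PolyBtw N k (matchPartner n S N c) (matchPartner n S N k) := by
  have hlt := (matchDist_lt hS hk).trans_le (Nat.le_of_dvd (NeZero.pos N) hN)
  have hc' : c = ((k + (c - k).val : ℕ) : Fin N) := by simp
  rw [matchPartner_natCast_of_isUp hS hN hk] at hc ⊢
  rw [hc', polyBtw_natCast_add_iff k (c - k).isLt hlt] at hc
  obtain ⟨u, hu, hud, hpu⟩ := exists_matchPartner_eq_of_lt_matchDist hS hN hk hc.1 hc.2
  rw [hc', hpu, polyBtw_natCast_add_iff k (by omega) hlt]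
  exact ⟨hu, hud⟩

theorem polyBtw_matchPartner [NeZero n] (a c : Fin N) (h : PolyBtw N a c (matchPartner n S N a)) :
    PolyBtw N a (matchPartner n S N c) (matchPartner n S N a) := by
  obtain ⟨k, hk, rfl | rfl⟩ := exists_isUp_natCast_eq hS hN a
  · exact polyBtw_matchPartner_natCast hS hN hk c h
  · rw [matchPartner_natCast_add_matchDist hS hN hk] at h ⊢
    rw [← matchPartner_natCast_of_isUp hS hN hk] at h ⊢
    exact polyBtw_apply_swap (matchPartner_involutive hS hN)
      (polyBtw_matchPartner_natCast hS hN hk) h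

theorem matchPartner_add_two_mul [NeZero n] (x : Fin N) :
    matchPartner n S N (x + (2 * n : ℕ)) = matchPartner n S N x + (2 * n : ℕ) := by
  have hup : ∀ {k}, IsUp n S k → IsUp n S (k + 2 * n) := (isUp_add_of_dvd (dvd_refl _) _).2
  have hd := matchDist_add_of_dvd hS (dvd_refl (2 * n))
  obtain ⟨k, hk, rfl | rfl⟩ := exists_isUp_natCast_eq hS hN x
  · rw [← Nat.cast_add, matchPartner_natCast_of_isUp hS hN (hup hk),
      matchPartner_natCast_of_isUp hS hN hk, hd]
    push_cast; ring
  · rw [← Nat.cast_add, show k + matchDist n S k + 2 * n = k + 2 * n + matchDist n S (k + 2 * n)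
      by rw [hd]; ring, matchPartner_natCast_add_matchDist hS hN (hup hk),
      matchPartner_natCast_add_matchDist hS hN hk]
    push_cast; ring

noncomputable def ncMatching [NeZero n] : PolyNCMatching N :=
  .ofInvolution (matchPartner_involutive hS hN) (matchPartner_ne hS hN) (polyBtw_matchPartner hS hN)

theorem partner_ncMatching [NeZero n] : (ncMatching hS hN).partner = matchPartner n S N :=
  PolyNCMatching.partner_ofInvolution _ _ _

theorem isOpener_ncMatching_natCast_iff [NeZero n] (h4 : 4 * n ≤ N) (k : ℕ) :
    (ncMatching hS hN).IsOpener (k : Fin N) ↔ IsUp n S k := by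
  have hopen : ∀ {o}, IsUp n S o → (ncMatching hS hN).IsOpener (o : Fin N) := fun {o} ho => by
    rw [PolyNCMatching.IsOpener, partner_ncMatching, matchPartner_natCast_of_isUp hS hN ho,
      Fin.val_natCast_sub_natCast (by omega) (by have := matchDist_lt hS ho; omega)]
    have := matchDist_lt hS ho
    omega
  refine ⟨fun hk => ?_, hopen⟩
  obtain ⟨o, ho, hko | hko⟩ := exists_isUp_natCast_eq hS hN (k : Fin N)
  · exact (isUp_congr_natCast hN hko).1 ho
  · refine absurd hk (hko ▸ ?_)
    have := (ncMatching hS hN).not_isOpener_partner (hopen ho)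
    rwa [partner_ncMatching, matchPartner_natCast_of_isUp hS hN ho] at this

end Matching

end PeriodicWord

namespace PolyNCMatching

open Fin.CommRing PeriodicWord

variable {n : ℕ} [NeZero n]

noncomputable def openerSet (M : PolyNCMatching (6 * n)) : Finset ℕ :=
  (range (2 * n)).filter fun k => M.IsOpener (k : Fin (6 * n))

theorem openerSet_ncMatching {S : Finset ℕ} (hS : S ∈ powersetCard n (range (2 * n)))
    (hN : 2 * n ∣ 6 * n) : openerSet (ncMatching hS hN) = S := by
  ext k
  rw [openerSet, mem_filter, mem_range, isOpener_ncMatching_natCast_iff hS hN (by omega), IsUp]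
  have hsub := (mem_powersetCard.1 hS).1
  exact ⟨fun ⟨hk, h⟩ => Nat.mod_eq_of_lt hk ▸ h,
    fun h => ⟨mem_range.1 (hsub h), (Nat.mod_eq_of_lt (mem_range.1 (hsub h))).symm ▸ h⟩⟩

section Invariant

variable {M : PolyNCMatching (6 * n)}
  (hM : ∀ x, M.partner (x + (2 * n : ℕ)) = M.partner x + (2 * n : ℕ))
include hM

theorem periodic_isOpener_natCast :
    Function.Periodic (fun k : ℕ => M.IsOpener (k : Fin (6 * n))) (2 * n) := fun k => by
  simp only [Nat.cast_add, M.isOpener_add_iff hM]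

theorem isUp_openerSet_iff (k : ℕ) : IsUp n (openerSet M) k ↔ M.IsOpener (k : Fin (6 * n)) := by
  rw [IsUp, openerSet, mem_filter, mem_range, ← (periodic_isOpener_natCast hM).map_mod_nat k]
  exact and_iff_right (Nat.mod_lt k (by simp [NeZero.pos n]))

theorem two_mul_val_sub_partner_ne_of_rotate (x : Fin (6 * n)) :
    2 * (M.partner x - x).val ≠ 6 * n := by
  have hr : ((2 * n : ℕ) : Fin (6 * n)).val = 2 * n := by
    rw [Fin.val_natCast, Nat.mod_eq_of_lt (by have := NeZero.pos n; omega)]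
  exact M.two_mul_val_sub_partner_ne hM (by rw [hr]; exact Nat.mul_pos two_pos (NeZero.pos n))
    (by rw [hr]; have := NeZero.pos n; omega) x

theorem openerSet_mem_powersetCard : openerSet M ∈ powersetCard n (range (2 * n)) := by
  refine mem_powersetCard.2 ⟨filter_subset _ _, ?_⟩
  have htotal := M.two_mul_card_isOpener (two_mul_val_sub_partner_ne_of_rotate hM)
  have hcount : #(univ.filter M.IsOpener) =
      Nat.count (fun k => M.IsOpener (k : Fin (6 * n))) (6 * n) := by
    rw [← Fin.card_filter_val_eq_count]
    simp only [Fin.cast_val_eq_self]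
  have hthree := Nat.count_mul_of_periodic (periodic_isOpener_natCast hM) 3
  rw [show 3 * (2 * n) = 6 * n by ring] at hthree
  rw [hcount, hthree, Nat.count_eq_card_filter_range] at htotal
  rw [openerSet]
  omega

theorem matchPartner_openerSet :
    matchPartner n (openerSet M) (6 * n) = M.partner := by
  have hS := openerSet_mem_powersetCard hM
  have hN : 2 * n ∣ 6 * n := mul_dvd_mul_right (by norm_num) n
  have hopener : ∀ x, M.IsOpener x → matchPartner n (openerSet M) (6 * n) x = M.partner x := by
    intro x hx
    have hup : IsUp n (openerSet M) x.val := by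
      rwa [isUp_openerSet_iff hM, Fin.cast_val_eq_self]
    rw [← Fin.cast_val_eq_self x, matchPartner_natCast_of_isUp hS hN hup,
      matchDist_eq_val_partner_sub (isUp_openerSet_iff hM) hx]
    simp
  funext x
  rcases M.isOpener_or_isOpener_partner (two_mul_val_sub_partner_ne_of_rotate hM x) with hx | hx
  · exact hopener x hx
  · conv_lhs => rw [← M.partner_involutive x, ← hopener _ hx, matchPartner_involutive hS hN]

end Invariant

variable (n) in
theorem image_add_mk_pairs_eq_iff (M : PolyNCMatching (6 * n)) (h : 2 * n < 6 * n) :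
    M.pairs.image (fun e => e.image (· + ⟨2 * n, h⟩)) = M.pairs ↔
      ∀ x, M.partner (x + (2 * n : ℕ)) = M.partner x + (2 * n : ℕ) := by
  rw [← image_add_pairs_eq_iff, show (⟨2 * n, h⟩ : Fin (6 * n)) = ((2 * n : ℕ) : Fin (6 * n)) from
    Fin.ext (by rw [Fin.val_natCast, Nat.mod_eq_of_lt h])]

variable (n) in
noncomputable def rotationInvariantEquiv :
    {M : PolyNCMatching (6 * n) //
        M.pairs.image (fun e => e.image (· + ⟨2 * n, by have := NeZero.pos n; omega⟩)) = M.pairs}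
      ≃ powersetCard n (range (2 * n)) where
  toFun M := ⟨openerSet M.1,
    openerSet_mem_powersetCard ((image_add_mk_pairs_eq_iff n M.1 _).1 M.2)⟩
  invFun S := ⟨ncMatching S.2 (mul_dvd_mul_right (by norm_num) n),
    (image_add_mk_pairs_eq_iff n _ _).2 (by
      rw [partner_ncMatching]
      exact matchPartner_add_two_mul S.2 (mul_dvd_mul_right (by norm_num) n))⟩
  left_inv M := Subtype.ext <| ext_of_partner <| by
    rw [partner_ncMatching]
    exact matchPartner_openerSet ((image_add_mk_pairs_eq_iff n M.1 _).1 M.2)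
  right_inv S := Subtype.ext (openerSet_ncMatching S.2 (mul_dvd_mul_right (by norm_num) n))

end PolyNCMatching

/-- The number of `Z₃`-symmetric non-crossing perfect matchings of the sides of a
regular `6n`-gon with a marked side (i.e. labeled sides) — genus-zero pairwise side
gluings invariant under the rotation by `2π/3`, the shift by `2n` — is `(2n).choose n`. -/
theorem card_Z3_symmetric_gluings (n : ℕ) (hn : 1 ≤ n) :
    Nat.card {M : PolyNCMatching (6 * n) //
        M.pairs.image (fun e => e.image (· + (⟨2 * n, by omega⟩ : Fin (6 * n)))) = M.pairs}
      = (2 * n).choose n := by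
  have : NeZero n := ⟨by omega⟩
  rw [Nat.card_congr (PolyNCMatching.rotationInvariantEquiv n), Nat.card_eq_finsetCard,
    card_powersetCard, card_range]
end

section
/- The sequence (d_n) defined by the recurrences d_n = 2·d_{n−2} + 2·d_{n−4}·C_1 + 2·d_{n−6}·C_2 + … + 2·d_2·C_{(n−4)/2} + 2·C_{(n−2)/2} for even n ≥ 2, and d_n = 2·d_{n−2} + 2·d_{n−4}·C_1 + … + 2·d_1·C_{(n−3)/2} + C_{(n−1)/2} for odd n ≥ 1 (with d_0 interpreted as 1 and d_{−1} as 1/2), satisfies d_{2k} = binom(2k, k) and d_{2k−1} = (1/2)·binom(2k, k). -/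
open Finset

lemma key (n : ℕ) :
    2 * ∑ i ∈ Finset.range (n+1), ((2*(n-i)).choose (n-i) : ℚ) * catalan i
      = ((2*(n+1)).choose (n+1) : ℚ) := by
  have hcb : ∀ j : ℕ, ((2*j).choose j : ℚ) = (j+1) * catalan j := by
    intro j
    have h := succ_mul_catalan_eq_centralBinom j
    have : ((j+1) * catalan j : ℕ) = (2*j).choose j := h
    exact_mod_cast (congrArg (Nat.cast : ℕ → ℚ) this).symm
  have hS : (catalan (n+1) : ℚ) = ∑ i ∈ Finset.range (n+1), (catalan (n-i) : ℚ) * catalan i := by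
    rw [catalan_succ']
    push_cast
    rw [Finset.Nat.sum_antidiagonal_eq_sum_range_succ (fun x y => (catalan x : ℚ) * catalan y)]
    exact Finset.sum_congr rfl fun i _ => mul_comm _ _
  -- reflection
  have hrefl : ∑ i ∈ Finset.range (n+1), ((n - i : ℕ) : ℚ) * catalan (n-i) * catalan i
      = ∑ i ∈ Finset.range (n+1), (i : ℚ) * catalan (n-i) * catalan i := by
    rw [← Finset.sum_range_reflect]
    apply Finset.sum_congr rfl
    intro i hi
    simp only [Finset.mem_range] at hi
    have hi' : i ≤ n := Nat.lt_succ_iff.mp hi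
    have h1 : n + 1 - 1 - i = n - i := by omega
    have h2 : n - (n - i) = i := by omega
    rw [h1, h2]
    ring
  have hsum2 : 2 * ∑ i ∈ Finset.range (n+1), ((n - i : ℕ) : ℚ) * catalan (n-i) * catalan i
      = n * ∑ i ∈ Finset.range (n+1), (catalan (n-i) : ℚ) * catalan i := by
    rw [two_mul]
    nth_rewrite 2 [hrefl]
    rw [← Finset.sum_add_distrib, Finset.mul_sum]
    apply Finset.sum_congr rfl
    intro i hi
    simp only [Finset.mem_range] at hi
    have : ((n - i : ℕ) : ℚ) = (n : ℚ) - i := by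
      have : i ≤ n := Nat.lt_succ_iff.mp hi
      push_cast [this]; ring
    rw [this]; ring
  calc 2 * ∑ i ∈ Finset.range (n+1), ((2*(n-i)).choose (n-i) : ℚ) * catalan i
      = 2 * ∑ i ∈ Finset.range (n+1), (((n-i : ℕ) : ℚ) + 1) * catalan (n-i) * catalan i := by
        congr 1; apply Finset.sum_congr rfl; intro i _; rw [hcb]
    _ = 2 * ∑ i ∈ Finset.range (n+1), ((n-i : ℕ) : ℚ) * catalan (n-i) * catalan i
        + 2 * ∑ i ∈ Finset.range (n+1), (catalan (n-i) : ℚ) * catalan i := by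
        rw [← mul_add, ← Finset.sum_add_distrib]; congr 1; apply Finset.sum_congr rfl
        intro i _; ring
    _ = ((n : ℚ) + 2) * catalan (n+1) := by rw [hsum2, hS]; ring
    _ = ((2*(n+1)).choose (n+1) : ℚ) := by rw [hcb]; push_cast; ring

/-- The sequence `d` in `ℚ` determined by `d 0 = 1` and the recurrences
`d (2m) = 2·(d (2m-2)·C₀ + d (2m-4)·C₁ + … + d 2·C_{m-2}) + 2·C_{m-1}` and
`d (2m-1) = 2·(d (2m-3)·C₀ + … + d 1·C_{m-2}) + C_{m-1}` (the boundary terms being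
`2·C_{m-1} = 2·d₀·C_{m-1}` and `C_{m-1} = 2·d₋₁·C_{m-1}` with `d₀ = 1`, `d₋₁ = 1/2`)
satisfies `d (2k) = (2k).choose k` and `d (2k-1) = (1/2)·(2k).choose k`. -/
theorem d_recurrence_solution (d : ℕ → ℚ) (h0 : d 0 = 1)
    (heven : ∀ m : ℕ, 1 ≤ m →
      d (2 * m) = 2 * ∑ i ∈ Finset.range (m - 1), d (2 * (m - 1 - i)) * catalan i
        + 2 * catalan (m - 1))
    (hodd : ∀ m : ℕ, 1 ≤ m →
      d (2 * m - 1) = 2 * ∑ i ∈ Finset.range (m - 1), d (2 * (m - 1 - i) - 1) * catalan i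
        + catalan (m - 1)) :
    (∀ k : ℕ, d (2 * k) = (2 * k).choose k) ∧
    (∀ k : ℕ, 1 ≤ k → d (2 * k - 1) = ((2 * k).choose k : ℚ) / 2) := by
  have hE : ∀ k : ℕ, d (2 * k) = (2 * k).choose k := by
    intro k
    induction k using Nat.strong_induction_on with
    | _ k ih =>
      match k with
      | 0 => simpa using h0
      | n + 1 =>
        have h := heven (n + 1) (by omega)
        simp only [Nat.add_sub_cancel] at h
        rw [h]
        have hsum : ∑ i ∈ Finset.range n, d (2 * (n - i)) * catalan i
            = ∑ i ∈ Finset.range n, ((2 * (n - i)).choose (n - i) : ℚ) * catalan i := by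
          apply Finset.sum_congr rfl
          intro i hi
          simp only [Finset.mem_range] at hi
          rw [ih (n - i) (by omega)]
        rw [hsum, ← key n, Finset.sum_range_succ]
        have : ((2 * (n - n)).choose (n - n) : ℚ) = 1 := by simp
        rw [this]
        ring
  have hO : ∀ k : ℕ, 1 ≤ k → d (2 * k - 1) = ((2 * k).choose k : ℚ) / 2 := by
    intro k
    induction k using Nat.strong_induction_on with
    | _ k ih =>
      match k with
      | 0 => omega
      | n + 1 =>
        intro _
        have h := hodd (n + 1) (by omega)
        simp only [Nat.add_sub_cancel] at h
        rw [h]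
        have hsum : ∑ i ∈ Finset.range n, d (2 * (n - i) - 1) * catalan i
            = ∑ i ∈ Finset.range n, ((2 * (n - i)).choose (n - i) : ℚ) / 2 * catalan i := by
          apply Finset.sum_congr rfl
          intro i hi
          simp only [Finset.mem_range] at hi
          rw [ih (n - i) (by omega) (by omega)]
        rw [hsum]
        have hk := key n
        rw [Finset.sum_range_succ] at hk
        have h1 : ((2 * (n - n)).choose (n - n) : ℚ) = 1 := by simp
        rw [h1] at hk
        have h2 : ∑ i ∈ Finset.range n, ((2 * (n - i)).choose (n - i) : ℚ) / 2 * catalan i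
            = (∑ i ∈ Finset.range n, ((2 * (n - i)).choose (n - i) : ℚ) * catalan i) / 2 := by
          rw [Finset.sum_div]
          exact Finset.sum_congr rfl fun i _ => by ring
        rw [h2]
        linarith [hk]
  exact ⟨hE, hO⟩
end

section
/- The sequence e_n defined by e_0 = 1 and the recurrence e_n = 2·(e_{n−1}·C_0 + e_{n−2}·C_1 + … + e_1·C_{n−2} + C_{n−1}) for n ≥ 1 satisfies e_n = binom(2n, n) for all n ≥ 0. -/
open Finset

lemma my_sum_identity (m : ℕ) :
    2 * ∑ i ∈ Finset.range (m+1), Nat.centralBinom (m - i) * catalan i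
      = Nat.centralBinom (m + 1) := by
  have h1 : ∀ i ∈ Finset.range (m+1),
      Nat.centralBinom (m - i) * catalan i
        = (m - i + 1) * (catalan (m - i) * catalan i) := by
    intro i _
    rw [← succ_mul_catalan_eq_centralBinom, mul_assoc]
  rw [Finset.sum_congr rfl h1]
  have hrefl : ∑ i ∈ Finset.range (m+1), (m - i + 1) * (catalan (m - i) * catalan i)
      = ∑ i ∈ Finset.range (m+1), (i + 1) * (catalan (m - i) * catalan i) := by
    rw [← Finset.sum_range_reflect]
    apply Finset.sum_congr rfl
    intro i hi
    simp only [Finset.mem_range] at hi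
    have h2 : m + 1 - 1 - i = m - i := by omega
    rw [h2]
    have h3 : m - (m - i) = i := by omega
    rw [h3]
    ring
  have expand : 2 * ∑ i ∈ Finset.range (m+1), (m-i+1)*(catalan (m-i)*catalan i)
      = ∑ i ∈ Finset.range (m+1), (m-i+1)*(catalan (m-i)*catalan i)
        + ∑ i ∈ Finset.range (m+1), (i+1)*(catalan (m-i)*catalan i) := by
    rw [← hrefl]; ring
  rw [expand, ← Finset.sum_add_distrib]
  have hpt : ∀ i ∈ Finset.range (m+1),
      (m-i+1)*(catalan (m-i)*catalan i) + (i+1)*(catalan (m-i)*catalan i)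
        = (m+2) * (catalan i * catalan (m-i)) := by
    intro i hi
    simp only [Finset.mem_range] at hi
    have h4 : m - i + 1 + (i+1) = m + 2 := by omega
    rw [← add_mul, h4]; ring
  have hcat : catalan (m+1) = ∑ i ∈ Finset.range (m+1), catalan i * catalan (m-i) := by
    rw [catalan_succ]; exact Fin.sum_univ_eq_sum_range (fun j => catalan j * catalan (m - j)) (m+1)
  rw [Finset.sum_congr rfl hpt, ← Finset.mul_sum, ← hcat,
    succ_mul_catalan_eq_centralBinom]

/-- The sequence `e` defined by `e 0 = 1` and
`e n = 2·(e (n-1)·C₀ + e (n-2)·C₁ + … + e 1·C_{n-2} + C_{n-1})` for `n ≥ 1`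
satisfies `e n = (2n).choose n` for all `n`. -/
theorem e_recurrence_solution (e : ℕ → ℕ) (h0 : e 0 = 1)
    (hrec : ∀ n : ℕ, 1 ≤ n →
      e n = 2 * ∑ i ∈ Finset.range n, e (n - 1 - i) * catalan i) :
    ∀ n : ℕ, e n = (2 * n).choose n := by
  intro n
  induction n using Nat.strong_induction_on with
  | _ n ih =>
    match n with
    | 0 => simpa using h0
    | m+1 =>
      rw [hrec (m+1) (by omega)]
      have hcong : ∀ i ∈ Finset.range (m+1), e (m+1-1-i) * catalan i
          = Nat.centralBinom (m - i) * catalan i := by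
        intro i hi
        simp only [Finset.mem_range] at hi
        have h5 : m + 1 - 1 - i = m - i := by omega
        rw [h5, ih (m - i) (by omega), Nat.centralBinom]
      rw [Finset.sum_congr rfl hcong, my_sum_identity, Nat.centralBinom]
end

section
/- As formal power series over ℚ, the generating function E(t) = Σ_{n≥0} binom(2n, n) t^n satisfies E(t)·(1 − 2t·C(t)) = 1, where C(t) = Σ_{n≥0} C_n t^n is the Catalan generating function. -/
/-!
Put `D = 1 - 2tC(t)`. The Catalan equation `C = 1 + tC²` gives `D² = 1 - 4t`, and the recurrence
`binom(2n+2, n+1) + 2Cₙ = 4·binom(2n, n)` says `E·(1 - 4t) = D`. Hence `E·D² = D`, and `D`, having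
constant coefficient `1`, is a unit that can be cancelled.
-/

open PowerSeries

theorem Nat.centralBinom_succ_add_two_mul_catalan (n : ℕ) :
    (n + 1).centralBinom + 2 * catalan n = 4 * n.centralBinom := by
  apply Nat.eq_of_mul_eq_mul_left n.succ_pos
  calc (n + 1) * ((n + 1).centralBinom + 2 * catalan n)
      = (n + 1) * (n + 1).centralBinom + 2 * ((n + 1) * catalan n) := by ring
    _ = 2 * (2 * n + 1) * n.centralBinom + 2 * n.centralBinom := by
      rw [succ_mul_centralBinom_succ, succ_mul_catalan_eq_centralBinom]
    _ = (n + 1) * (4 * n.centralBinom) := by ring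

namespace PowerSeries

def centralBinomSeries : ℕ⟦X⟧ := mk Nat.centralBinom

theorem centralBinomSeries_add_two_mul_X_mul_catalanSeries :
    centralBinomSeries + 2 * X * catalanSeries = 1 + 4 * X * centralBinomSeries := by
  -- numerals must be seen as constants `C a` for `coeff_C_mul` to apply
  rw [← map_ofNat (C (R := ℕ)) 2, ← map_ofNat (C (R := ℕ)) 4]
  ext (_ | n)
  · simp [centralBinomSeries]
  · simp only [centralBinomSeries, map_add, mul_left_comm _ X, mul_assoc, coeff_succ_X_mul,
      coeff_C_mul, coeff_mk, catalanSeries_coeff, coeff_one, n.succ_ne_zero, if_false, zero_add]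
    exact Nat.centralBinom_succ_add_two_mul_catalan n

variable {R : Type*} [CommRing R]

theorem one_sub_two_mul_X_mul_map_catalanSeries_sq :
    (1 - 2 * X * catalanSeries.map (Nat.castRingHom R)) ^ 2 = 1 - 4 * X := by
  have h := congrArg (map (Nat.castRingHom R)) catalanSeries_sq_mul_X_add_one
  simp only [map_add, map_mul, map_pow, map_X, map_one] at h
  linear_combination (4 * X) * h

theorem map_centralBinomSeries_mul_one_sub_four_mul_X :
    centralBinomSeries.map (Nat.castRingHom R) * (1 - 4 * X) =
      1 - 2 * X * catalanSeries.map (Nat.castRingHom R) := by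
  have h := congrArg (map (Nat.castRingHom R))
    centralBinomSeries_add_two_mul_X_mul_catalanSeries
  simp only [map_add, map_mul, map_ofNat, map_X, map_one] at h
  linear_combination h

theorem map_centralBinomSeries_mul_one_sub_two_mul_X_mul_map_catalanSeries :
    centralBinomSeries.map (Nat.castRingHom R) *
      (1 - 2 * X * catalanSeries.map (Nat.castRingHom R)) = 1 := by
  set D := 1 - 2 * X * catalanSeries.map (Nat.castRingHom R)
  have hD : IsUnit D := by
    simp [D, isUnit_iff_constantCoeff]
  apply hD.mul_left_injective
  calc centralBinomSeries.map (Nat.castRingHom R) * D * D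
      = centralBinomSeries.map (Nat.castRingHom R) * D ^ 2 := by ring
    _ = D := by
      rw [one_sub_two_mul_X_mul_map_catalanSeries_sq, map_centralBinomSeries_mul_one_sub_four_mul_X]
    _ = 1 * D := (one_mul D).symm

end PowerSeries

/-- As formal power series over `ℚ`, the central binomial generating function
`E(t) = Σ (2n).choose n · tⁿ` satisfies `E(t)·(1 − 2t·C(t)) = 1`, where
`C(t) = Σ catalan n · tⁿ` is the Catalan generating function. -/
theorem centralBinom_mul_one_sub_two_t_catalan :
    (PowerSeries.mk fun n => (((2 * n).choose n : ℕ) : ℚ)) *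
      (1 - 2 * PowerSeries.X * (PowerSeries.mk fun n => ((catalan n : ℕ) : ℚ))) = 1 := by
  convert map_centralBinomSeries_mul_one_sub_two_mul_X_mul_map_catalanSeries (R := ℚ) <;>
    ext n <;> simp [centralBinomSeries, Nat.centralBinom_eq_two_mul_choose]
end

section
/- For all n ≥ 1, binom(2n, n) = 2·Σ_{i=0}^{n−1} C_i · binom(2(n−1−i), n−1−i), where C_i is the i-th Catalan number. -/
open Finset

lemma catalan_succ_range (m : ℕ) :
    catalan (m + 1) = ∑ i ∈ Finset.range (m + 1), catalan i * catalan (m - i) := by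
  rw [catalan_succ]; exact Fin.sum_univ_eq_sum_range (fun i => catalan i * catalan (m - i)) (m + 1)

lemma key_conv (m : ℕ) :
    Nat.centralBinom (m + 1) =
      2 * ∑ i ∈ Finset.range (m + 1), catalan i * Nat.centralBinom (m - i) := by
  have h2 : 2 * ∑ i ∈ Finset.range (m + 1), catalan i * Nat.centralBinom (m - i)
      = ∑ i ∈ Finset.range (m + 1), (m + 2) * (catalan i * catalan (m - i)) := by
    rw [two_mul]
    nth_rewrite 2 [← Finset.sum_range_reflect
      (fun i => catalan i * Nat.centralBinom (m - i)) (m + 1)]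
    rw [← Finset.sum_add_distrib]
    apply Finset.sum_congr rfl
    intro i hi
    have hi' : i ≤ m := Nat.lt_succ_iff.mp (Finset.mem_range.mp hi)
    have e1 : m + 1 - 1 - i = m - i := by omega
    have e2 : m - (m - i) = i := by omega
    rw [e1, e2, ← succ_mul_catalan_eq_centralBinom, ← succ_mul_catalan_eq_centralBinom]
    have h3 : (m - i + 1) + (i + 1) = m + 2 := by omega
    rw [← h3]
    ring
  rw [h2, ← Finset.mul_sum, ← catalan_succ_range, succ_mul_catalan_eq_centralBinom]

/-- For `n ≥ 1`, `(2n).choose n = 2·Σ_{i=0}^{n-1} catalan i · (2(n-1-i)).choose (n-1-i)`. -/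
theorem centralBinom_eq_two_mul_catalan_convolution (n : ℕ) (hn : 1 ≤ n) :
    (2 * n).choose n =
      2 * ∑ i ∈ Finset.range n, catalan i * ((2 * (n - 1 - i)).choose (n - 1 - i)) := by
  obtain ⟨m, rfl⟩ := Nat.exists_eq_add_of_le hn
  have := key_conv m
  simpa [Nat.centralBinom, Nat.add_comm 1 m] using this
end
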